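/- Let V, W be m-dimensional affine subspaces of ℝ^d with sup_{x ∈ [0,1]^d} |π_V(x) − π_W(x)| ≤ ε, where π_V, π_W are orthogonal projections. Let Q be an axis-parallel cube contained in [0,1]^d and set I(Q,W,2ε) = {x ∈ Q ∩ W : dist(x, ∂Q) > 2ε}. Then I(Q,W,2ε) ⊆ π_W(V ∩ Q), and consequently H^m(I(Q,W,2ε)) ≤ H^m(V ∩ Q). -/

import Mathlib

/-!
The map `f x = π_V x - π_W x` is affine with linear part `P_V - P_W`. It is `ε`-small on the
unit cube, whose difference set contains every vector of sup norm `≤ 1`, so `‖P_V - P_W‖ ≤ 2ε`.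
If `x ∈ I`, the closed `2ε`-ball about `x` lies in `Q ⊆ [0,1]^d`, so `4ε ≤ 1`. Hence `P_W` is
injective on the direction of `V`, and by equality of dimensions `π_W` maps `V` onto `W`.
A preimage `v ∈ V` of `x` satisfies `v - x = f x + (P_V - P_W)(v - x)`, so `‖v - x‖ ≤ 2ε` and
`v ∈ Q`. The measure bound follows because `π_W` is `1`-Lipschitz.
-/

open MeasureTheory EuclideanGeometry

theorem IsPreconnected.subset_of_disjoint_frontier {α : Type*} [TopologicalSpace α]
    {s t : Set α} (hs : IsPreconnected s) (hst : (s ∩ t).Nonempty)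
    (hd : Disjoint s (frontier t)) : s ⊆ t := by
  have hint : ∀ y ∈ s, y ∈ closure t → y ∈ interior t := fun y hys hyt =>
    by_contra fun hyi => hd.ne_of_mem hys ⟨hyt, hyi⟩ rfl
  refine (hs.subset_of_closure_inter_subset isOpen_interior ?_ ?_).trans interior_subset
  · obtain ⟨y, hys, hyt⟩ := hst
    exact ⟨y, hys, hint y hys (subset_closure hyt)⟩
  · rintro y ⟨hyt, hys⟩
    exact hint y hys (closure_mono interior_subset hyt)

theorem Metric.closedBall_subset_of_lt_infDist_frontier {E : Type*} [NormedAddCommGroup E]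
    [NormedSpace ℝ E] {s : Set E} {x : E} {δ : ℝ} (hx : x ∈ s)
    (hδ : δ < Metric.infDist x (frontier s)) : Metric.closedBall x δ ⊆ s := by
  rcases lt_or_ge δ 0 with hneg | hnonneg
  · simp [Metric.closedBall_eq_empty.2 hneg]
  exact (convex_closedBall x δ).isPreconnected.subset_of_disjoint_frontier
    ⟨x, Metric.mem_closedBall_self hnonneg, hx⟩ (Metric.disjoint_closedBall_of_lt_infDist hδ)

def unitCube (ι : Type*) : Set (EuclideanSpace ℝ ι) := {y | ∀ i, 0 ≤ y i ∧ y i ≤ 1}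

theorem two_mul_le_one_of_closedBall_subset_unitCube {ι : Type*} [Fintype ι] [DecidableEq ι]
    (i : ι) {x : EuclideanSpace ℝ ι} {δ : ℝ} (h : Metric.closedBall x δ ⊆ unitCube ι) :
    2 * δ ≤ 1 := by
  rcases lt_or_ge δ 0 with hneg | hnonneg
  · linarith
  have hmem : ∀ c : ℝ, |c| = δ → x + c • EuclideanSpace.single i 1 ∈ unitCube ι :=
    fun c hc => h (by simp [norm_smul, hc])
  have hup := (hmem δ (abs_of_nonneg hnonneg) i).2
  have hdown := (hmem (-δ) (by simp [abs_of_nonneg hnonneg]) i).1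
  simp only [PiLp.add_apply, PiLp.smul_apply, PiLp.single_eq_same, smul_eq_mul, mul_one, neg_smul,
    PiLp.neg_apply, le_add_neg_iff_add_le, zero_add] at hup hdown
  linarith

theorem AffineMap.norm_linear_apply_le_of_forall_unitCube {ι F : Type*} [Fintype ι]
    [NormedAddCommGroup F] [NormedSpace ℝ F] (f : EuclideanSpace ℝ ι →ᵃ[ℝ] F) {ε : ℝ}
    (hf : ∀ y ∈ unitCube ι, ‖f y‖ ≤ ε) (u : EuclideanSpace ℝ ι) :
    ‖f.linear u‖ ≤ 2 * ε * ‖u‖ := by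
  rcases eq_or_ne u 0 with rfl | hu
  · simp
  have hpos : 0 < ‖u‖ := norm_pos_iff.2 hu
  have hcube : ∀ c : ι → ℝ, (∀ i, 0 ≤ c i ∧ c i ≤ |u i|) →
      WithLp.toLp 2 (fun i => c i / ‖u‖) ∈ unitCube ι := fun c hc i =>
    ⟨div_nonneg (hc i).1 hpos.le,
      div_le_one_of_le₀ ((hc i).2.trans (by simpa using PiLp.norm_apply_le u i)) hpos.le⟩
  set a : EuclideanSpace ℝ ι := WithLp.toLp 2 (fun i => max (u i) 0 / ‖u‖)
  set b : EuclideanSpace ℝ ι := WithLp.toLp 2 (fun i => max (-u i) 0 / ‖u‖)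
  have ha : a ∈ unitCube ι :=
    hcube _ fun i => ⟨le_max_right _ _, max_le (le_abs_self _) (abs_nonneg _)⟩
  have hb : b ∈ unitCube ι :=
    hcube _ fun i => ⟨le_max_right _ _, max_le (neg_le_abs _) (abs_nonneg _)⟩
  have hu_eq : u = ‖u‖ • (a -ᵥ b) := by
    ext i
    simp [a, b, ← sub_div, max_zero_sub_max_neg_zero_eq_self, mul_div_cancel₀ _ hpos.ne']
  calc ‖f.linear u‖ = ‖f.linear (‖u‖ • (a -ᵥ b))‖ := by rw [← hu_eq]
    _ = ‖u‖ * ‖f a - f b‖ := by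
        rw [map_smul, f.linearMap_vsub, norm_smul, norm_norm, vsub_eq_sub]
    _ ≤ ‖u‖ * (ε + ε) := by
        gcongr
        exact (norm_sub_le _ _).trans (add_le_add (hf a ha) (hf b hb))
    _ = 2 * ε * ‖u‖ := by ring

namespace EuclideanGeometry

variable {E : Type*} [NormedAddCommGroup E] [InnerProductSpace ℝ E]
  (V W : AffineSubspace ℝ E) [Nonempty V] [Nonempty W]
  [V.direction.HasOrthogonalProjection] [W.direction.HasOrthogonalProjection]

theorem coe_orthogonalProjection_add (u x : E) :
    (orthogonalProjection W (u + x) : E) =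
      W.direction.starProjection u + orthogonalProjection W x := by
  simpa using congrArg Subtype.val ((orthogonalProjection W).map_vadd x u)

theorem lipschitzWith_coe_orthogonalProjection :
    LipschitzWith 1 fun x => (orthogonalProjection W x : E) := by
  refine LipschitzWith.of_dist_le_mul fun x y => ?_
  rw [dist_eq_norm, dist_eq_norm, NNReal.coe_one, one_mul, ← sub_add_cancel x y,
    coe_orthogonalProjection_add, sub_add_cancel, add_sub_cancel_right]
  exact W.direction.norm_starProjection_apply_le _

noncomputable def projectionDiff : E →ᵃ[ℝ] E :=
  V.subtype.comp (orthogonalProjection V) - W.subtype.comp (orthogonalProjection W)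

@[simp]
theorem projectionDiff_apply (x : E) :
    projectionDiff V W x = (orthogonalProjection V x : E) - orthogonalProjection W x := rfl

@[simp]
theorem projectionDiff_linear_apply (u : E) :
    (projectionDiff V W).linear u = V.direction.starProjection u - W.direction.starProjection u :=
  rfl

variable {V W}

theorem injective_orthogonalProjectionOnto_comp_subtype {δ : ℝ} (hδ : δ < 1)
    (hlin : ∀ u, ‖(projectionDiff V W).linear u‖ ≤ δ * ‖u‖) :
    Function.Injective
      (W.direction.orthogonalProjectionOnto.toLinearMap ∘ₗ V.direction.subtype) := by
  refine (injective_iff_map_eq_zero _).2 fun s hs => ?_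
  have hWs : W.direction.starProjection s = 0 := congrArg Subtype.val hs
  have hs_le : ‖(s : E)‖ ≤ δ * ‖(s : E)‖ := by
    simpa [hWs, Submodule.starProjection_eq_self_iff.2 s.2] using hlin s
  have : ‖(s : E)‖ = 0 := by nlinarith [norm_nonneg (s : E)]
  exact Subtype.ext (norm_eq_zero.1 this)

theorem surjOn_coe_orthogonalProjection [FiniteDimensional ℝ E]
    (hdim : Module.finrank ℝ V.direction = Module.finrank ℝ W.direction) {δ : ℝ} (hδ : δ < 1)
    (hlin : ∀ u, ‖(projectionDiff V W).linear u‖ ≤ δ * ‖u‖) :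
    Set.SurjOn (fun v => (orthogonalProjection W v : E)) V W := by
  intro x hx
  set p : E := (orthogonalProjection V x : E)
  have hw : x - orthogonalProjection W p ∈ W.direction :=
    AffineSubspace.vsub_mem_direction hx (orthogonalProjection_mem p)
  obtain ⟨s, hs⟩ := (LinearMap.injective_iff_surjective_of_finrank_eq_finrank hdim).1
    (injective_orthogonalProjectionOnto_comp_subtype hδ hlin) ⟨_, hw⟩
  have hs' : W.direction.starProjection s = x - orthogonalProjection W p := congrArg Subtype.val hs
  refine ⟨s + p, AffineSubspace.vadd_mem_of_mem_direction s.2 (orthogonalProjection_mem x), ?_⟩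
  simp only [coe_orthogonalProjection_add, hs', sub_add_cancel]

theorem dist_le_two_mul_norm_projectionDiff {δ : ℝ} (hδ : δ ≤ 1 / 2)
    (hlin : ∀ u, ‖(projectionDiff V W).linear u‖ ≤ δ * ‖u‖) {v x : E} (hv : v ∈ V)
    (hvx : (orthogonalProjection W v : E) = x) :
    dist v x ≤ 2 * ‖projectionDiff V W x‖ := by
  have hdiff : v - x = (projectionDiff V W).linear (v - x) + projectionDiff V W x := by
    rw [← vsub_eq_sub v x, (projectionDiff V W).linearMap_vsub]
    simp [orthogonalProjection_eq_self_iff.2 hv, hvx]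
  have h : ‖v - x‖ ≤ δ * ‖v - x‖ + ‖projectionDiff V W x‖ :=
    (congrArg norm hdiff).le.trans ((norm_add_le _ _).trans (add_le_add_left (hlin _) _))
  rw [dist_eq_norm]
  nlinarith [norm_nonneg (v - x)]

end EuclideanGeometry

theorem stmt_5_general {d m : ℕ} (hm1 : 1 ≤ m)
    (V W : AffineSubspace ℝ (EuclideanSpace ℝ (Fin d)))
    [Nonempty V] [Nonempty W]
    (hVdim : Module.finrank ℝ V.direction = m)
    (hWdim : Module.finrank ℝ W.direction = m)
    (ε : ℝ)
    (hclose : ∀ x ∈ {y : EuclideanSpace ℝ (Fin d) | ∀ i, 0 ≤ y i ∧ y i ≤ 1},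
      dist (EuclideanGeometry.orthogonalProjection V x : EuclideanSpace ℝ (Fin d))
        (EuclideanGeometry.orthogonalProjection W x : EuclideanSpace ℝ (Fin d)) ≤ ε)
    (Q : Set (EuclideanSpace ℝ (Fin d)))
    (hQsub : Q ⊆ {x | ∀ i, 0 ≤ x i ∧ x i ≤ 1})
    (I : Set (EuclideanSpace ℝ (Fin d)))
    (hI : I = {x ∈ (W : Set (EuclideanSpace ℝ (Fin d))) ∩ Q |
      2 * ε < Metric.infDist x (frontier Q)}) :
    I ⊆ (fun x => (EuclideanGeometry.orthogonalProjection W x : EuclideanSpace ℝ (Fin d))) ''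
        ((V : Set (EuclideanSpace ℝ (Fin d))) ∩ Q) ∧
    μH[(m : ℝ)] I ≤ μH[(m : ℝ)] ((V : Set (EuclideanSpace ℝ (Fin d))) ∩ Q) := by
  have hd : 0 < d := by
    have := V.direction.finrank_le
    rw [hVdim, finrank_euclideanSpace_fin] at this
    omega
  have hlin : ∀ u, ‖(projectionDiff V W).linear u‖ ≤ 2 * ε * ‖u‖ :=
    (projectionDiff V W).norm_linear_apply_le_of_forall_unitCube fun y hy => by
      simpa [dist_eq_norm] using hclose y hy
  have hsub : I ⊆ (fun x => (orthogonalProjection W x : EuclideanSpace ℝ (Fin d))) '' (V ∩ Q) := by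
    rintro x hx
    rw [hI] at hx
    obtain ⟨⟨hxW, hxQ⟩, hx_far⟩ := hx
    have hball := Metric.closedBall_subset_of_lt_infDist_frontier hxQ hx_far
    have hε : 2 * (2 * ε) ≤ 1 :=
      two_mul_le_one_of_closedBall_subset_unitCube ⟨0, hd⟩ (hball.trans hQsub)
    have hδ : 2 * ε < 1 := by linarith
    obtain ⟨v, hvV, hvx⟩ := surjOn_coe_orthogonalProjection (hVdim.trans hWdim.symm) hδ hlin hxW
    refine ⟨v, ⟨hvV, hball ?_⟩, hvx⟩
    calc dist v x ≤ 2 * ‖projectionDiff V W x‖ :=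
          dist_le_two_mul_norm_projectionDiff (by linarith) hlin hvV hvx
      _ ≤ 2 * ε := by simpa [dist_eq_norm] using hclose x (hQsub hxQ)
  refine ⟨hsub, (measure_mono hsub).trans ?_⟩
  simpa using (lipschitzWith_coe_orthogonalProjection W).hausdorffMeasure_image_le
    (Nat.cast_nonneg m) (V ∩ Q)

theorem stmt_5 {d m : ℕ} (hm1 : 1 ≤ m) (hmd : m ≤ d - 1)
    (V W : AffineSubspace ℝ (EuclideanSpace ℝ (Fin d)))
    [Nonempty V] [Nonempty W]
    (hVdim : Module.finrank ℝ V.direction = m)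
    (hWdim : Module.finrank ℝ W.direction = m)
    (ε : ℝ) (hε : 0 < ε)
    (hclose : ∀ x ∈ {y : EuclideanSpace ℝ (Fin d) | ∀ i, 0 ≤ y i ∧ y i ≤ 1},
      dist (EuclideanGeometry.orthogonalProjection V x : EuclideanSpace ℝ (Fin d))
        (EuclideanGeometry.orthogonalProjection W x : EuclideanSpace ℝ (Fin d)) ≤ ε)
    (a : EuclideanSpace ℝ (Fin d)) (r : ℝ) (hr : 0 < r)
    (Q : Set (EuclideanSpace ℝ (Fin d)))
    (hQ : Q = {x | ∀ i, a i ≤ x i ∧ x i ≤ a i + r})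
    (hQsub : Q ⊆ {x | ∀ i, 0 ≤ x i ∧ x i ≤ 1})
    (I : Set (EuclideanSpace ℝ (Fin d)))
    (hI : I = {x ∈ (W : Set (EuclideanSpace ℝ (Fin d))) ∩ Q |
      2 * ε < Metric.infDist x (frontier Q)}) :
    I ⊆ (fun x => (EuclideanGeometry.orthogonalProjection W x : EuclideanSpace ℝ (Fin d))) ''
        ((V : Set (EuclideanSpace ℝ (Fin d))) ∩ Q) ∧
    μH[(m : ℝ)] I ≤ μH[(m : ℝ)] ((V : Set (EuclideanSpace ℝ (Fin d))) ∩ Q) :=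
  stmt_5_general hm1 V W hVdim hWdim ε hclose Q hQsub I hI
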